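/- A finite k-poset is a core if and only if all of its connected components are cores and its connected components are pairwise incomparable in the homomorphism quasiorder (no component admits a homomorphism into a different component). -/

import Mathlib

/-- A homomorphism of `k`-posets: an order-preserving, label-preserving map. -/
def IsKPosetHom {k : ℕ} {P Q : Type*} [PartialOrder P] [PartialOrder Q]
    (c : P → Fin k) (d : Q → Fin k) (f : P → Q) : Prop :=
  Monotone f ∧ ∀ x, d (f x) = c x

/-- Two elements of a poset are fence-related (lie in the same connected
component) if they are joined by a finite sequence whose consecutive members are
comparable. -/
def FenceRel {P : Type*} [PartialOrder P] (a b : P) : Prop :=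
  ∃ (n : ℕ) (p : Fin (n + 1) → P), p 0 = a ∧ p (Fin.last n) = b ∧
    ∀ i : Fin n, p i.castSucc ≤ p i.succ ∨ p i.succ ≤ p i.castSucc

section Fence
variable {P : Type*} [PartialOrder P]

private lemma chain_aux : ∀ (n : ℕ) (p : Fin (n + 1) → P),
    (∀ i : Fin n, p i.castSucc ≤ p i.succ ∨ p i.succ ≤ p i.castSucc) →
    Relation.ReflTransGen (fun u v : P => u ≤ v ∨ v ≤ u) (p 0) (p (Fin.last n)) := by
  intro n
  induction n with
  | zero => intro p _; exact Relation.ReflTransGen.refl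
  | succ n ih =>
    intro p hp
    have h1 := ih (p ∘ Fin.castSucc) (fun i => by
      have := hp i.castSucc
      rw [Fin.succ_castSucc] at this; exact this)
    have h2 := hp (Fin.last n)
    rw [Fin.succ_last] at h2
    exact Relation.ReflTransGen.tail (by simpa using h1) h2

lemma fenceRel_iff {a b : P} :
    FenceRel a b ↔ Relation.ReflTransGen (fun u v : P => u ≤ v ∨ v ≤ u) a b := by
  constructor
  · rintro ⟨n, p, h0, hl, hp⟩
    rw [← h0, ← hl]; exact chain_aux n p hp
  · intro h
    induction h with
    | refl => exact ⟨0, fun _ => a, rfl, rfl, fun i => i.elim0⟩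
    | tail _ hbc ih =>
      obtain ⟨n, p, h0, hl, hp⟩ := ih
      rename_i b' c' _
      refine ⟨n + 1, Fin.snoc p c', by rw [show (0 : Fin (n+1+1)) = (0 : Fin (n+1)).castSucc from Fin.castSucc_zero.symm, Fin.snoc_castSucc, h0], by simp, ?_⟩
      intro i
      refine Fin.lastCases ?_ ?_ i
      · rw [Fin.succ_last, Fin.snoc_last, Fin.snoc_castSucc, hl]; exact hbc
      · intro j
        rw [Fin.succ_castSucc, Fin.snoc_castSucc, Fin.snoc_castSucc]
        exact hp j

lemma FenceRel.refl (a : P) : FenceRel a a := fenceRel_iff.2 Relation.ReflTransGen.refl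

lemma FenceRel.symm {a b : P} (h : FenceRel a b) : FenceRel b a := by
  rw [fenceRel_iff] at *
  haveI : Std.Symm (fun u v : P => u ≤ v ∨ v ≤ u) := ⟨fun u v h => h.symm⟩
  exact Std.Symm.symm _ _ h

lemma FenceRel.trans {a b c : P} (h1 : FenceRel a b) (h2 : FenceRel b c) : FenceRel a c := by
  rw [fenceRel_iff] at *; exact h1.trans h2

lemma FenceRel.of_le {a b : P} (h : a ≤ b) : FenceRel a b :=
  fenceRel_iff.2 (Relation.ReflTransGen.single (Or.inl h))

lemma FenceRel.map {Q : Type*} [PartialOrder Q] {f : P → Q} (hf : Monotone f)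
    {a b : P} (h : FenceRel a b) : FenceRel (f a) (f b) := by
  rw [fenceRel_iff] at *
  induction h with
  | refl => exact Relation.ReflTransGen.refl
  | tail _ hbc ih =>
    exact ih.tail (hbc.imp (fun h => hf h) (fun h => hf h))

end Fence


/-- A finite `k`-poset is a core iff all its connected components are cores and
no connected component admits a homomorphism into a different component.
(The component of `x` is the `k`-subposet `{y | FenceRel x y}`.) -/
theorem core_iff_components {k : ℕ} {P : Type*} [PartialOrder P] [Fintype P]
    (c : P → Fin k) :
    (∀ f : P → P, IsKPosetHom c c f → Function.Surjective f) ↔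
      ((∀ x : P, ∀ f : {y : P // FenceRel x y} → {y : P // FenceRel x y},
          IsKPosetHom (fun z : {y : P // FenceRel x y} => c z)
            (fun z : {y : P // FenceRel x y} => c z) f →
          Function.Surjective f) ∧
        ∀ x y : P, ¬ FenceRel x y →
          ¬ ∃ f : {z : P // FenceRel x z} → {z : P // FenceRel y z},
            IsKPosetHom (fun u : {z : P // FenceRel x z} => c u)
              (fun u : {z : P // FenceRel y z} => c u) f) := by
  classical
  constructor
  · intro h
    constructor
    · -- each component is a core
      intro x f hf
      set g : P → P := fun p => if hp : FenceRel x p then (f ⟨p, hp⟩ : P) else p with hg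
      have hghom : IsKPosetHom c c g := by
        constructor
        · intro a b hab
          by_cases ha : FenceRel x a
          · have hb : FenceRel x b := ha.trans (FenceRel.of_le hab)
            simp only [hg, dif_pos ha, dif_pos hb]
            exact hf.1 (show (⟨a, ha⟩ : {y // FenceRel x y}) ≤ ⟨b, hb⟩ from hab)
          · have hb : ¬ FenceRel x b := fun hb =>
              ha (hb.trans (FenceRel.of_le hab).symm)
            simp only [hg, dif_neg ha, dif_neg hb]
            exact hab
        · intro p
          by_cases hp : FenceRel x p
          · simp only [hg, dif_pos hp]
            exact hf.2 ⟨p, hp⟩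
          · simp only [hg, dif_neg hp]
      rintro ⟨z, hz⟩
      obtain ⟨w, hw⟩ := h g hghom z
      by_cases hwx : FenceRel x w
      · refine ⟨⟨w, hwx⟩, Subtype.ext ?_⟩
        simpa only [hg, dif_pos hwx] using hw
      · exfalso
        simp only [hg, dif_neg hwx] at hw
        rw [hw] at hwx
        exact hwx hz
    · -- no homs between distinct components
      rintro x y hxy ⟨f, hf⟩
      set g : P → P := fun p => if hp : FenceRel x p then (f ⟨p, hp⟩ : P) else p with hg
      have hghom : IsKPosetHom c c g := by
        constructor
        · intro a b hab
          by_cases ha : FenceRel x a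
          · have hb : FenceRel x b := ha.trans (FenceRel.of_le hab)
            simp only [hg, dif_pos ha, dif_pos hb]
            exact hf.1 (show (⟨a, ha⟩ : {z // FenceRel x z}) ≤ ⟨b, hb⟩ from hab)
          · have hb : ¬ FenceRel x b := fun hb =>
              ha (hb.trans (FenceRel.of_le hab).symm)
            simp only [hg, dif_neg ha, dif_neg hb]
            exact hab
        · intro p
          by_cases hp : FenceRel x p
          · simp only [hg, dif_pos hp]
            exact hf.2 ⟨p, hp⟩
          · simp only [hg, dif_neg hp]
      obtain ⟨w, hw⟩ := h g hghom x
      by_cases hwx : FenceRel x w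
      · simp only [hg, dif_pos hwx] at hw
        have h2 := (f ⟨w, hwx⟩).2
        rw [hw] at h2
        exact hxy h2.symm
      · simp only [hg, dif_neg hwx] at hw
        rw [hw] at hwx
        exact hwx (FenceRel.refl x)
  · rintro ⟨hcore, hsep⟩ f hf
    -- f maps each component into itself
    have hfix : ∀ p : P, FenceRel p (f p) := by
      intro p
      by_contra hp
      refine hsep p (f p) hp ⟨fun z => ⟨f z, FenceRel.map hf.1 z.2⟩, ?_, ?_⟩
      · intro a b hab
        exact hf.1 (show (a : P) ≤ b from hab)
      · intro z
        exact hf.2 z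
    intro z
    set F : {u : P // FenceRel z u} → {u : P // FenceRel z u} :=
      fun w => ⟨f w, w.2.trans (hfix w)⟩ with hF
    have hFhom : IsKPosetHom (fun u : {u : P // FenceRel z u} => c u)
        (fun u : {u : P // FenceRel z u} => c u) F := by
      constructor
      · intro a b hab
        exact hf.1 (show (a : P) ≤ b from hab)
      · intro u
        exact hf.2 u
    obtain ⟨⟨w, hw⟩, hww⟩ := hcore z F hFhom ⟨z, FenceRel.refl z⟩
    exact ⟨w, congrArg Subtype.val hww⟩
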